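/- Let 𝕍 be a horizontal homogeneous subgroup of ℍⁿ with vertical complement 𝕍^⊥ = V^⊥ × ℝ, and equip 𝕍^⊥ with the Euclidean metric of ℝ^{2n+1}. Then the projection π_{𝕍^⊥} : ℍⁿ → (𝕍^⊥, d_{ℝ^{2n+1}}) given by p = p_{𝕍^⊥} * p_𝕍 is locally David–Semmes (dim V + 1)-regular: it is Lipschitz on compact sets (from the Korányi metric to the Euclidean metric), and for every compact K ⊆ ℍⁿ there are C ≥ 1, r₀ > 0 such that for every Euclidean ball B ⊆ 𝕍^⊥ of radius r < r₀, π_{𝕍^⊥}⁻¹(B) ∩ K can be covered by at most C·r^{−(dim V + 1)} Korányi balls of radius C·r. -/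

import Mathlib

open Metric
open scoped ENNReal NNReal

/-- The underlying space of the `n`-th Heisenberg group `ℍⁿ = ℝ^{2n} × ℝ`. -/
abbrev Heis (n : ℕ) := EuclideanSpace ℝ (Fin (2 * n)) × ℝ

/-- The standard symplectic form `ω(x,y) = ∑ᵢ (x_{n+i} yᵢ − xᵢ y_{n+i})` on `ℝ^{2n}`. -/
def symp (n : ℕ) (x y : EuclideanSpace ℝ (Fin (2 * n))) : ℝ :=
  ∑ i : Fin n,
    (x ⟨n + i.1, by have := i.isLt; omega⟩ * y ⟨i.1, by have := i.isLt; omega⟩ -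
      x ⟨i.1, by have := i.isLt; omega⟩ * y ⟨n + i.1, by have := i.isLt; omega⟩)

/-- The Heisenberg group law `(x,t)*(x',t') = (x+x', t+t'+2ω(x,x'))`. -/
def hmul {n : ℕ} (p q : Heis n) : Heis n :=
  (p.1 + q.1, p.2 + q.2 + 2 * symp n p.1 q.1)

/-- The Heisenberg group inverse. -/
def hinv {n : ℕ} (p : Heis n) : Heis n := (-p.1, -p.2)

/-- The Korányi norm `‖(x,t)‖ = (‖x‖⁴ + t²)^{1/4}`. -/
noncomputable def knorm {n : ℕ} (p : Heis n) : ℝ :=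
  (‖p.1‖ ^ 4 + p.2 ^ 2) ^ ((1 : ℝ) / 4)

/-- The Korányi metric `d(p,q) = ‖p⁻¹ * q‖`. -/
noncomputable def kdist {n : ℕ} (p q : Heis n) : ℝ := knorm (hmul (hinv p) q)

/-- The horizontal subgroup `𝕍 = V × {0}` determined by a subspace `V ⊆ ℝ^{2n}`. -/
def horizSub (n : ℕ) (V : Submodule ℝ (EuclideanSpace ℝ (Fin (2 * n)))) : Set (Heis n) :=
  {p : Heis n | p.1 ∈ V ∧ p.2 = 0}

/-- The projection `π_𝕍 : ℍⁿ → 𝕍` induced by the splitting `p = p_{𝕍^⊥} * p_𝕍`;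
explicitly `π_𝕍(p) = (P_V p₁, 0)` with `P_V` the Euclidean orthogonal projection. -/
noncomputable def projHoriz (n : ℕ) (V : Submodule ℝ (EuclideanSpace ℝ (Fin (2 * n))))
    [CompleteSpace V] (p : Heis n) : Heis n :=
  ((V.orthogonalProjectionOnto p.1 : EuclideanSpace ℝ (Fin (2 * n))), 0)

/-- The vertical complement `𝕍^⊥ = V^⊥ × ℝ` of a horizontal subgroup. -/
def vertSub (n : ℕ) (V : Submodule ℝ (EuclideanSpace ℝ (Fin (2 * n)))) : Set (Heis n) :=
  {p : Heis n | p.1 ∈ Vᗮ}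

/-- The projection `π_{𝕍^⊥} : ℍⁿ → 𝕍^⊥` from the splitting `p = p_{𝕍^⊥} * p_𝕍`,
i.e. `π_{𝕍^⊥}(p) = p * (π_𝕍 p)⁻¹`. -/
noncomputable def projVert (n : ℕ) (V : Submodule ℝ (EuclideanSpace ℝ (Fin (2 * n))))
    [CompleteSpace V] (p : Heis n) : Heis n :=
  hmul p (hinv (projHoriz n V p))

/-- The Euclidean distance on `ℍⁿ = ℝ^{2n+1}`. -/
noncomputable def eudist {n : ℕ} (p q : Heis n) : ℝ :=
  Real.sqrt (‖p.1 - q.1‖ ^ 2 + (p.2 - q.2) ^ 2)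


/-!
The Lipschitz bound factors through the sup metric of `ℝ^{2n} × ℝ`: `projVert` is polynomial,
hence Lipschitz on compact sets, and on a bounded set the Korányi distance `d` controls the
horizontal displacement by `d` and the vertical one by `d² + O(d)`.

For the covering, split `q = π(q) * (w, 0)` with `w = P_V q₁`. If `π(q)` is `r`-close to `a`,
then `q` is `O(r)`-close in the Korányi metric to `a * (g, k r²)`, where `g` is a point of the
lattice `r ℤ^m` of `V` nearest to `w` and `k ∈ ℤ`: isotropy of `V` kills the cross term `ω(g, w)`,
so the remaining vertical displacement is `O(r)` and is corrected to within `r²` by `k`.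
On a compact set this needs `O(r^{-m})` lattice points and `O(r^{-1})` values of `k`.
-/

section Symplectic

variable {n : ℕ}

lemma symp_add_left (x y z : EuclideanSpace ℝ (Fin (2 * n))) :
    symp n (x + y) z = symp n x z + symp n y z := by
  simp only [symp, ← Finset.sum_add_distrib, PiLp.add_apply]
  exact Finset.sum_congr rfl fun _ _ => by ring

lemma symp_add_right (x y z : EuclideanSpace ℝ (Fin (2 * n))) :
    symp n x (y + z) = symp n x y + symp n x z := by
  simp only [symp, ← Finset.sum_add_distrib, PiLp.add_apply]
  exact Finset.sum_congr rfl fun _ _ => by ring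

lemma symp_neg_left (x y : EuclideanSpace ℝ (Fin (2 * n))) : symp n (-x) y = -symp n x y := by
  simp only [symp, ← Finset.sum_neg_distrib, PiLp.neg_apply]
  exact Finset.sum_congr rfl fun _ _ => by ring

lemma symp_neg_right (x y : EuclideanSpace ℝ (Fin (2 * n))) : symp n x (-y) = -symp n x y := by
  simp only [symp, ← Finset.sum_neg_distrib, PiLp.neg_apply]
  exact Finset.sum_congr rfl fun _ _ => by ring

lemma symp_swap (x y : EuclideanSpace ℝ (Fin (2 * n))) : symp n y x = -symp n x y := by
  simp only [symp, ← Finset.sum_neg_distrib]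
  exact Finset.sum_congr rfl fun _ _ => by ring

lemma symp_self (x : EuclideanSpace ℝ (Fin (2 * n))) : symp n x x = 0 := by
  linarith [symp_swap x x]

lemma abs_symp_le (x y : EuclideanSpace ℝ (Fin (2 * n))) :
    |symp n x y| ≤ 2 * n * (‖x‖ * ‖y‖) := by
  have hcoord : ∀ (v : EuclideanSpace ℝ (Fin (2 * n))) j, |v j| ≤ ‖v‖ := fun v j =>
    (Real.norm_eq_abs _).symm.trans_le (PiLp.norm_apply_le v j)
  have hterm : ∀ (a b c d : Fin (2 * n)), |x a * y b - x c * y d| ≤ 2 * (‖x‖ * ‖y‖) := by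
    intro a b c d
    calc |x a * y b - x c * y d| ≤ |x a| * |y b| + |x c| * |y d| := by
          rw [← abs_mul, ← abs_mul]; exact abs_sub _ _
      _ ≤ ‖x‖ * ‖y‖ + ‖x‖ * ‖y‖ := by
          gcongr <;> exact hcoord _ _
      _ = 2 * (‖x‖ * ‖y‖) := by ring
  calc |symp n x y| ≤ ∑ _i : Fin n, 2 * (‖x‖ * ‖y‖) :=
        (Finset.abs_sum_le_sum_abs _ _).trans (Finset.sum_le_sum fun _ _ => hterm _ _ _ _)
    _ = 2 * n * (‖x‖ * ‖y‖) := by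
      simp only [Finset.sum_const, Finset.card_univ, Fintype.card_fin, nsmul_eq_mul]; ring

lemma contDiff_symp : ContDiff ℝ 1 fun p : EuclideanSpace ℝ (Fin (2 * n)) ×
    EuclideanSpace ℝ (Fin (2 * n)) => symp n p.1 p.2 := by
  unfold symp; fun_prop

end Symplectic

lemma contDiff_projVert (n : ℕ) (V : Submodule ℝ (EuclideanSpace ℝ (Fin (2 * n))))
    [CompleteSpace V] : ContDiff ℝ 1 (projVert n V) := by
  have hP : ContDiff ℝ 1 fun x : EuclideanSpace ℝ (Fin (2 * n)) =>
      (V.orthogonalProjectionOnto x : EuclideanSpace ℝ (Fin (2 * n))) :=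
    (V.subtypeL.comp V.orthogonalProjectionOnto).contDiff
  have hω : ContDiff ℝ 1 fun p : Heis n => symp n p.1 (-V.orthogonalProjectionOnto p.1) :=
    contDiff_symp.comp (contDiff_fst.prodMk (hP.comp contDiff_fst).neg)
  unfold projVert projHoriz hmul hinv
  dsimp only
  exact (contDiff_fst.add (hP.comp contDiff_fst).neg).prodMk
    ((contDiff_snd.add contDiff_const).add (contDiff_const.mul hω))

section Koranyi

variable {n : ℕ}

lemma knorm_nonneg (p : Heis n) : 0 ≤ knorm p :=
  Real.rpow_nonneg (by positivity) _

lemma knorm_pow_four (p : Heis n) : knorm p ^ 4 = ‖p.1‖ ^ 4 + p.2 ^ 2 := by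
  rw [knorm, ← Real.rpow_natCast, ← Real.rpow_mul (by positivity)]
  norm_num

lemma norm_fst_le_knorm (p : Heis n) : ‖p.1‖ ≤ knorm p := by
  refine (pow_le_pow_iff_left₀ (norm_nonneg _) (knorm_nonneg p) four_ne_zero).1 ?_
  rw [knorm_pow_four]
  nlinarith [sq_nonneg p.2]

lemma abs_snd_le_knorm_sq (p : Heis n) : |p.2| ≤ knorm p ^ 2 := by
  refine abs_le_of_sq_le_sq ?_ (by positivity)
  rw [← pow_mul, knorm_pow_four]
  nlinarith [pow_nonneg (norm_nonneg p.1) 4]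

lemma knorm_lt_of_lt {p : Heis n} {α r : ℝ} (hα : 0 ≤ α) (hr : 0 < r)
    (h₁ : ‖p.1‖ < α * r) (h₂ : |p.2| ≤ r ^ 2) : knorm p < (α + 1) * r := by
  refine (pow_lt_pow_iff_left₀ (knorm_nonneg p) (by positivity) four_ne_zero).1 ?_
  have h₁' : ‖p.1‖ ^ 4 < (α * r) ^ 4 := pow_lt_pow_left₀ h₁ (norm_nonneg _) four_ne_zero
  have h₂' : p.2 ^ 2 ≤ (r ^ 2) ^ 2 := sq_le_sq' (abs_le.1 h₂).1 (abs_le.1 h₂).2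
  rw [knorm_pow_four]
  nlinarith [pow_pos hr 4, pow_nonneg hα 3, pow_nonneg hα 2]

lemma kdist_eq (p q : Heis n) :
    kdist p q = knorm (q.1 - p.1, q.2 - p.2 - 2 * symp n p.1 q.1) := by
  simp only [kdist, hmul, hinv, symp_neg_left]
  congr 1
  exact Prod.ext (neg_add_eq_sub _ _) (by ring)

end Koranyi

lemma eudist_le_two_mul_dist {n : ℕ} (p q : Heis n) : eudist p q ≤ 2 * dist p q := by
  have h₁ : ‖p.1 - q.1‖ ≤ dist p q := by
    rw [Prod.dist_eq, ← dist_eq_norm]; exact le_max_left _ _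
  have h₂ : |p.2 - q.2| ≤ dist p q := by
    rw [Prod.dist_eq, ← Real.dist_eq]; exact le_max_right _ _
  rw [eudist, Real.sqrt_le_left (by positivity)]
  nlinarith [sq_abs (p.2 - q.2), abs_nonneg (p.2 - q.2), norm_nonneg (p.1 - q.1)]

lemma dist_le_eudist {n : ℕ} (p q : Heis n) : dist p q ≤ eudist p q := by
  rw [Prod.dist_eq, dist_eq_norm, Real.dist_eq, eudist]
  refine max_le (Real.le_sqrt_of_sq_le ?_) (Real.le_sqrt_of_sq_le ?_)
  · nlinarith [sq_nonneg (p.2 - q.2)]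
  · nlinarith [sq_abs (p.2 - q.2), sq_nonneg ‖p.1 - q.1‖]

lemma dist_le_mul_kdist {n : ℕ} {M : ℝ} {p q : Heis n} (hp : ‖p‖ ≤ M) (hq : ‖q‖ ≤ M) :
    dist p q ≤ (1 + 2 * M + 4 * n * M) * kdist p q := by
  have hfst : ‖q.1 - p.1‖ ≤ kdist p q :=
    kdist_eq p q ▸ norm_fst_le_knorm (q.1 - p.1, q.2 - p.2 - 2 * symp n p.1 q.1)
  have hsnd : |q.2 - p.2 - 2 * symp n p.1 q.1| ≤ kdist p q ^ 2 :=
    kdist_eq p q ▸ abs_snd_le_knorm_sq (q.1 - p.1, q.2 - p.2 - 2 * symp n p.1 q.1)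
  set d := kdist p q
  have hM : 0 ≤ M := (norm_nonneg p).trans hp
  have hd : 0 ≤ d := knorm_nonneg _
  have hp₁ : ‖p.1‖ ≤ M := (norm_fst_le p).trans hp
  have hω : |symp n p.1 q.1| ≤ 2 * n * (M * d) := by
    have : symp n p.1 q.1 = symp n p.1 (q.1 - p.1) := by
      rw [sub_eq_add_neg, symp_add_right, symp_neg_right, symp_self, neg_zero, add_zero]
    rw [this]
    exact (abs_symp_le _ _).trans (by gcongr)
  have hvert : |q.2 - p.2| ≤ d ^ 2 + 4 * n * M * d := by
    have := abs_add_le (q.2 - p.2 - 2 * symp n p.1 q.1) (2 * symp n p.1 q.1)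
    rw [sub_add_cancel, abs_mul, abs_two] at this
    linarith
  have hbdd : |q.2 - p.2| ≤ 2 * M := by
    have h₁ : |p.2| ≤ M := (Real.norm_eq_abs _ ▸ norm_snd_le p).trans hp
    have h₂ : |q.2| ≤ M := (Real.norm_eq_abs _ ▸ norm_snd_le q).trans hq
    linarith [abs_sub q.2 p.2]
  have hMd : 0 ≤ M * d := mul_nonneg hM hd
  have hnMd : 0 ≤ n * M * d := by positivity
  rw [Prod.dist_eq, dist_comm, dist_eq_norm, Real.dist_eq, abs_sub_comm]
  refine max_le (by nlinarith) ?_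
  rcases le_total d 1 with hd1 | hd1
  · nlinarith [mul_le_mul_of_nonneg_left hd1 hd]
  · nlinarith [mul_le_mul_of_nonneg_left hd1 hM]

lemma exists_eudist_projVert_le_mul_kdist (n : ℕ)
    (V : Submodule ℝ (EuclideanSpace ℝ (Fin (2 * n)))) [CompleteSpace V] {K : Set (Heis n)}
    (hK : IsCompact K) : ∃ L : ℝ, 0 ≤ L ∧
      ∀ p ∈ K, ∀ q ∈ K, eudist (projVert n V p) (projVert n V q) ≤ L * kdist p q := by
  obtain ⟨M, hM0, hM⟩ := hK.isBounded.exists_pos_norm_le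
  obtain ⟨Λ, hΛ⟩ := ((contDiff_projVert n V).locallyLipschitz.locallyLipschitzOn (s := K)
    ).exists_lipschitzOnWith_of_compact hK
  refine ⟨2 * Λ * (1 + 2 * M + 4 * n * M), by positivity, fun p hp q hq => ?_⟩
  calc eudist (projVert n V p) (projVert n V q) ≤ 2 * dist (projVert n V p) (projVert n V q) :=
        eudist_le_two_mul_dist _ _
    _ ≤ 2 * (Λ * dist p q) := by gcongr; exact hΛ.dist_le_mul p hp q hq
    _ ≤ 2 * (Λ * ((1 + 2 * M + 4 * n * M) * kdist p q)) := by
        gcongr; exact dist_le_mul_kdist (hM p hp) (hM q hq)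
    _ = 2 * Λ * (1 + 2 * M + 4 * n * M) * kdist p q := by ring

lemma exists_int_mem_Icc_abs_sub_mul_le {u A δ : ℝ} (hδ : 0 < δ) (hu : |u| ≤ A * δ) :
    ∃ k : ℤ, k ∈ Finset.Icc (-⌈A⌉) ⌈A⌉ ∧ |u - k * δ| ≤ δ / 2 := by
  have hround := abs_sub_round (u / δ)
  refine ⟨round (u / δ), ?_, ?_⟩
  · have hk : (|round (u / δ)| : ℝ) < ⌈A⌉ + 1 := by
      have : |u / δ| ≤ A := by rw [abs_div, abs_of_pos hδ, div_le_iff₀ hδ]; exact hu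
      have := abs_sub_abs_le_abs_sub (round (u / δ) : ℝ) (u / δ)
      rw [abs_sub_comm] at this
      linarith [Int.le_ceil A]
    rw [Finset.mem_Icc, ← abs_le, ← Int.lt_add_one_iff]
    exact_mod_cast hk
  · calc |u - round (u / δ) * δ| = |u / δ - round (u / δ)| * δ := by
          rw [← abs_of_pos hδ, ← abs_mul, abs_of_pos hδ, sub_mul, div_mul_cancel₀ _ hδ.ne']
      _ ≤ 1 / 2 * δ := by gcongr
      _ = δ / 2 := by ring

lemma OrthonormalBasis.exists_piFinset_norm_sub_sum_le {ι F : Type*} [Fintype ι] [DecidableEq ι]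
    [NormedAddCommGroup F] [InnerProductSpace ℝ F] (B : OrthonormalBasis ι ℝ F) {w : F}
    {A δ : ℝ} (hδ : 0 < δ) (hw : ‖w‖ ≤ A * δ) :
    ∃ c ∈ Fintype.piFinset fun _ : ι => Finset.Icc (-⌈A⌉) ⌈A⌉,
      ‖w - ∑ i, (c i * δ) • B i‖ ≤ Fintype.card ι * δ / 2 := by
  have hcoord : ∀ i, |B.repr w i| ≤ A * δ := fun i => by
    rw [B.repr_apply_apply]
    exact (abs_real_inner_le_norm _ _).trans (by rw [B.norm_eq_one, one_mul]; exact hw)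
  choose c hc using fun i => exists_int_mem_Icc_abs_sub_mul_le hδ (hcoord i)
  refine ⟨c, Fintype.mem_piFinset.2 fun i => (hc i).1, ?_⟩
  calc ‖w - ∑ i, (c i * δ) • B i‖ = ‖∑ i, (B.repr w i - c i * δ) • B i‖ := by
        simp only [sub_smul, Finset.sum_sub_distrib, B.sum_repr]
    _ ≤ ∑ i, ‖(B.repr w i - c i * δ) • B i‖ := norm_sum_le _ _
    _ ≤ ∑ _i : ι, δ / 2 := Finset.sum_le_sum fun i _ => by
        rw [norm_smul, B.norm_eq_one, mul_one, Real.norm_eq_abs]; exact (hc i).2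
    _ = Fintype.card ι * δ / 2 := by
        simp only [Finset.sum_const, Finset.card_univ, nsmul_eq_mul]; ring

lemma card_Icc_neg_ceil_div_le {A r : ℝ} (hA : 0 ≤ A) (hr : 0 < r) (hr1 : r ≤ 1) :
    ((Finset.Icc (-⌈A / r⌉) ⌈A / r⌉).card : ℝ) ≤ (2 * A + 3) / r := by
  have h0 : 0 ≤ ⌈A / r⌉ := Int.ceil_nonneg (by positivity)
  have hcard : ((Finset.Icc (-⌈A / r⌉) ⌈A / r⌉).card : ℝ) = 2 * ⌈A / r⌉ + 1 := by
    rw [Int.card_Icc, ← Int.cast_natCast, Int.toNat_of_nonneg (by omega)]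
    push_cast; ring
  rw [hcard, le_div_iff₀ hr]
  have := Int.ceil_lt_add_one (A / r)
  have : A / r * r = A := div_mul_cancel₀ _ hr.ne'
  nlinarith

lemma hmul_projVert_projHoriz (n : ℕ) (V : Submodule ℝ (EuclideanSpace ℝ (Fin (2 * n))))
    [CompleteSpace V] (p : Heis n) : hmul (projVert n V p) (projHoriz n V p) = p := by
  simp only [projVert, projHoriz, hmul, hinv, symp_add_left, symp_neg_left, symp_neg_right,
    symp_self]
  exact Prod.ext (by simp) (by ring)

lemma kdist_hmul_hmul {n : ℕ} (a b : Heis n) (g w : EuclideanSpace ℝ (Fin (2 * n))) (s : ℝ) :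
    kdist (hmul a (g, s)) (hmul b (w, 0)) =
      knorm (b.1 - a.1 + (w - g),
        b.2 - a.2 + 2 * symp n (b.1 - a.1) (b.1 + w + g) - 2 * symp n g w - s) := by
  rw [kdist_eq]
  congr 1
  simp only [hmul, sub_eq_add_neg, symp_add_left, symp_add_right, symp_neg_left, symp_self]
  refine Prod.ext ?_ ?_ <;> dsimp only
  · abel
  · linear_combination -2 * symp_swap (n := n) g b.1

noncomputable def gridPoint {n : ℕ} {V : Submodule ℝ (EuclideanSpace ℝ (Fin (2 * n)))}
    {ι : Type*} [Fintype ι] (B : OrthonormalBasis ι ℝ V) (a : Heis n) (r : ℝ) (ck : (ι → ℤ) × ℤ) :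
    Heis n :=
  hmul a (((∑ i, (ck.1 i * r) • B i : V) : EuclideanSpace ℝ (Fin (2 * n))), ck.2 * r ^ 2)

lemma exists_gridPoint_kdist_lt {n : ℕ} {V : Submodule ℝ (EuclideanSpace ℝ (Fin (2 * n)))}
    [CompleteSpace V] (hiso : ∀ x ∈ V, ∀ y ∈ V, symp n x y = 0) {ι : Type*} [Fintype ι]
    [DecidableEq ι] (B : OrthonormalBasis ι ℝ V) {a q : Heis n} {M r : ℝ} (hr : 0 < r)
    (hr1 : r ≤ 1) (hq : ‖q‖ ≤ M) (haq : eudist a (projVert n V q) < r) :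
    ∃ c ∈ Fintype.piFinset fun _ : ι => Finset.Icc (-⌈M / r⌉) ⌈M / r⌉,
      ∃ k ∈ Finset.Icc (-⌈(1 + 4 * n * (2 * M + Fintype.card ι)) / r⌉)
        ⌈(1 + 4 * n * (2 * M + Fintype.card ι)) / r⌉,
        kdist (gridPoint B a r (c, k)) q < (Fintype.card ι + 2) * r := by
  set b := projVert n V q
  set w : V := V.orthogonalProjectionOnto q.1
  have hm : (0 : ℝ) ≤ Fintype.card ι := Nat.cast_nonneg _
  have hq₁ : ‖q.1‖ ≤ M := (norm_fst_le q).trans hq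
  have hwM : ‖w‖ ≤ M / r * r := by
    rw [div_mul_cancel₀ _ hr.ne']
    exact (V.orthogonalProjectionOnto.le_of_opNorm_le V.orthogonalProjectionOnto_norm_le _).trans
      (by linarith)
  have hab : ‖b.1 - a.1‖ < r ∧ |b.2 - a.2| < r := by
    have := (dist_le_eudist a b).trans_lt haq
    rw [Prod.dist_eq, max_lt_iff, dist_comm, dist_eq_norm, dist_comm, Real.dist_eq] at this
    exact this
  obtain ⟨c, hc, hwg⟩ := B.exists_piFinset_norm_sub_sum_le hr hwM
  set g : V := ∑ i, (c i * r) • B i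
  have hgM : ‖g‖ ≤ M + Fintype.card ι := by
    have := norm_sub_le w (w - g)
    rw [sub_sub_cancel] at this
    have : (Fintype.card ι : ℝ) * r / 2 ≤ Fintype.card ι := by nlinarith
    linarith [div_mul_cancel₀ M hr.ne']
  -- the vertical part of `(a * (g, 0))⁻¹ * q`, once isotropy has removed `ω(g, w)`
  set τ := b.2 - a.2 + 2 * symp n (b.1 - a.1) (b.1 + w + g)
  have hτ : |τ| ≤ (1 + 4 * n * (2 * M + Fintype.card ι)) / r * r ^ 2 := by
    have hbwg : ‖b.1 + w + g‖ ≤ 2 * M + Fintype.card ι := by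
      have : b.1 + w = q.1 := by simp [b, w, projVert, projHoriz, hmul, hinv]
      rw [this]
      linarith [norm_add_le q.1 (g : EuclideanSpace ℝ (Fin (2 * n))), Submodule.norm_coe g]
    have hω : |symp n (b.1 - a.1) (b.1 + w + g)| ≤ 2 * n * (r * (2 * M + Fintype.card ι)) :=
      (abs_symp_le _ _).trans (by gcongr; exact hab.1.le)
    rw [div_mul_eq_mul_div, pow_two, ← mul_assoc, mul_div_cancel_right₀ _ hr.ne']
    have := abs_add_le (b.2 - a.2) (2 * symp n (b.1 - a.1) (b.1 + w + g))
    rw [abs_mul, abs_two] at this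
    nlinarith
  obtain ⟨k, hk, hτk⟩ := exists_int_mem_Icc_abs_sub_mul_le (pow_pos hr 2) hτ
  refine ⟨c, hc, k, hk, ?_⟩
  calc kdist (gridPoint B a r (c, k)) q = kdist (hmul a (g, k * r ^ 2)) (hmul b (w, 0)) := by
        conv_lhs => rw [← hmul_projVert_projHoriz n V q]
        rfl
    _ = knorm (b.1 - a.1 + ↑(w - g), τ - k * r ^ 2) := by
        rw [kdist_hmul_hmul, Submodule.coe_sub, hiso g g.2 w w.2, mul_zero, sub_zero]
    _ < (Fintype.card ι + 1 + 1) * r := by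
        refine knorm_lt_of_lt (by positivity) hr ?_ (hτk.trans (by linarith [pow_pos hr 2]))
        have := norm_add_le (b.1 - a.1) ↑(w - g)
        rw [Submodule.norm_coe] at this
        nlinarith
    _ = (Fintype.card ι + 2) * r := by ring

lemma exists_kdist_cover_preimage_projVert {n : ℕ}
    {V : Submodule ℝ (EuclideanSpace ℝ (Fin (2 * n)))} [CompleteSpace V]
    (hiso : ∀ x ∈ V, ∀ y ∈ V, symp n x y = 0) {K : Set (Heis n)} (hK : IsCompact K) : ∃ C : ℝ, 1 ≤ C ∧ ∃ r₀ : ℝ, 0 < r₀ ∧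
      ∀ a : Heis n, ∀ r : ℝ, 0 < r → r < r₀ →
        ∃ T : Finset (Heis n),
          (T.card : ℝ) ≤ C * r ^ (-((Module.finrank ℝ V : ℝ) + 1)) ∧
          projVert n V ⁻¹' {b | b ∈ vertSub n V ∧ eudist a b < r} ∩ K ⊆
            ⋃ x ∈ T, {q : Heis n | kdist x q < C * r} := by
  classical
  obtain ⟨M, hM0, hM⟩ := hK.isBounded.exists_pos_norm_le
  set m := Module.finrank ℝ V
  set B := stdOrthonormalBasis ℝ V
  set A := 1 + 4 * n * (2 * M + m)
  refine ⟨max (m + 2) ((2 * M + 3) ^ m * (2 * A + 3)),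
    le_max_of_le_left (by linarith [Nat.cast_nonneg (α := ℝ) m]), 1, one_pos, fun a r hr hr1 => ?_⟩
  refine ⟨((Fintype.piFinset fun _ : Fin m => Finset.Icc (-⌈M / r⌉) ⌈M / r⌉) ×ˢ
    Finset.Icc (-⌈A / r⌉) ⌈A / r⌉).image (gridPoint B a r), ?_, ?_⟩
  · have hrpow : r ^ (-((m : ℝ) + 1)) = (1 / r) ^ m * (1 / r) := by
      rw [Real.rpow_neg hr.le, ← Nat.cast_add_one, Real.rpow_natCast, one_div, ← pow_succ,
        inv_pow]
    calc (((Fintype.piFinset fun _ : Fin m => Finset.Icc (-⌈M / r⌉) ⌈M / r⌉) ×ˢ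
          Finset.Icc (-⌈A / r⌉) ⌈A / r⌉).image (gridPoint B a r)).card
        ≤ ((Finset.Icc (-⌈M / r⌉) ⌈M / r⌉).card : ℝ) ^ m *
            (Finset.Icc (-⌈A / r⌉) ⌈A / r⌉).card := by
          exact_mod_cast Finset.card_image_le.trans (by simp [Finset.card_product])
      _ ≤ ((2 * M + 3) / r) ^ m * ((2 * A + 3) / r) := by
          gcongr
          · exact card_Icc_neg_ceil_div_le hM0.le hr hr1.le
          · exact card_Icc_neg_ceil_div_le (by positivity) hr hr1.le
      _ = (2 * M + 3) ^ m * (2 * A + 3) * r ^ (-((m : ℝ) + 1)) := by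
          rw [hrpow, div_eq_mul_one_div (2 * M + 3), div_eq_mul_one_div (2 * A + 3), mul_pow]; ring
      _ ≤ _ := by gcongr; exact le_max_right _ _
  · rintro q ⟨⟨-, haq⟩, hqK⟩
    obtain ⟨c, hc, k, hk, hlt⟩ := exists_gridPoint_kdist_lt hiso B hr hr1.le (hM q hqK) haq
    simp only [Fintype.card_fin] at hk hlt
    have hck : (c, k) ∈ (Fintype.piFinset fun _ : Fin m => Finset.Icc (-⌈M / r⌉) ⌈M / r⌉) ×ˢ
        Finset.Icc (-⌈A / r⌉) ⌈A / r⌉ := Finset.mem_product.2 ⟨hc, hk⟩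
    exact Set.mem_iUnion₂.2 ⟨_, Finset.mem_image_of_mem _ hck,
      hlt.trans_le (by gcongr; exact le_max_left _ _)⟩

theorem projVert_DSregular_general (n : ℕ)
    (V : Submodule ℝ (EuclideanSpace ℝ (Fin (2 * n))))
    (hiso : ∀ x ∈ V, ∀ y ∈ V, symp n x y = 0) :
    (∀ K : Set (Heis n), IsCompact K → ∃ L : ℝ, 0 ≤ L ∧
      ∀ p ∈ K, ∀ q ∈ K, eudist (projVert n V p) (projVert n V q) ≤ L * kdist p q) ∧
    ∀ K : Set (Heis n), IsCompact K → ∃ C : ℝ, 1 ≤ C ∧ ∃ r₀ : ℝ, 0 < r₀ ∧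
      ∀ a ∈ vertSub n V, ∀ r : ℝ, 0 < r → r < r₀ →
        ∃ T : Finset (Heis n),
          (T.card : ℝ) ≤ C * r ^ (-((Module.finrank ℝ V : ℝ) + 1)) ∧
          projVert n V ⁻¹' {b | b ∈ vertSub n V ∧ eudist a b < r} ∩ K ⊆
            ⋃ x ∈ T, {q : Heis n | kdist x q < C * r} := by
  refine ⟨fun K hK => exists_eudist_projVert_le_mul_kdist n V hK, fun K hK => ?_⟩
  obtain ⟨C, hC, r₀, hr₀, hcover⟩ := exists_kdist_cover_preimage_projVert hiso hK
  exact ⟨C, hC, r₀, hr₀, fun a _ => hcover a⟩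

/-- The projection of `ℍⁿ` onto the vertical complement `𝕍^⊥` of a horizontal subgroup,
with `𝕍^⊥` equipped with the Euclidean metric, is locally David–Semmes
`(dim V + 1)`-regular: Lipschitz on compact sets from the Korányi to the Euclidean metric,
and preimages of Euclidean balls of radius `r` in `𝕍^⊥` intersected with a compact set can
be covered by `≤ C r^{-(dim V + 1)}` Korányi balls of radius `Cr`. -/
theorem projVert_DSregular (n : ℕ) (hn : 0 < n)
    (V : Submodule ℝ (EuclideanSpace ℝ (Fin (2 * n))))
    (hiso : ∀ x ∈ V, ∀ y ∈ V, symp n x y = 0) :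
    (∀ K : Set (Heis n), IsCompact K → ∃ L : ℝ, 0 ≤ L ∧
      ∀ p ∈ K, ∀ q ∈ K, eudist (projVert n V p) (projVert n V q) ≤ L * kdist p q) ∧
    ∀ K : Set (Heis n), IsCompact K → ∃ C : ℝ, 1 ≤ C ∧ ∃ r₀ : ℝ, 0 < r₀ ∧
      ∀ a ∈ vertSub n V, ∀ r : ℝ, 0 < r → r < r₀ →
        ∃ T : Finset (Heis n),
          (T.card : ℝ) ≤ C * r ^ (-((Module.finrank ℝ V : ℝ) + 1)) ∧
          projVert n V ⁻¹' {b | b ∈ vertSub n V ∧ eudist a b < r} ∩ K ⊆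
            ⋃ x ∈ T, {q : Heis n | kdist x q < C * r} :=
  projVert_DSregular_general n V hiso
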